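/- arXiv:2007.13158 — 3 statements merged into one kernel-verified Lean document; each statement's English description precedes it below -/
import Mathlib

section
/- For real parameters x₁, y₁, z₁ with z₁ ≠ 0, the double integral over the rectangle [−Lₓ, Lₓ] × [−L_y, L_y] of ((x−x₁)² + (y−y₁)² + z₁²)^(−3/2) dx dy equals z₁⁻¹ · F(x,y) evaluated with alternating signs at the four corners, where F(x,y) = arctan[ (x₁−x)(y₁−y) / ( z₁ √((x₁−x)² + (y₁−y)² + z₁²) ) ], i.e. the integral equals z₁⁻¹ (F(Lₓ,L_y) − F(Lₓ,−L_y) − F(−Lₓ,L_y) + F(−Lₓ,−L_y)). -/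
/-!
After translating the source point to the origin, the inner integral is elementary:
`y / (A √(A + y²))` is an antiderivative of `(A + y²)^(-3/2)`, here with `A = x² + z²`.
Evaluated between the two `y`-limits `v`, the result in `x` is `v / ((x² + z²) √(x² + z² + v²))`,
which is `z⁻¹` times the derivative of `x ↦ arctan (x v / (z √(x² + v² + z²)))`.
-/

open Real

lemma rpow_neg_three_div_two_eq_inv_sqrt_pow {t : ℝ} (ht : 0 ≤ t) :
    t ^ (-(3 : ℝ) / 2) = (√t ^ 3)⁻¹ := by
  rw [sqrt_eq_rpow, ← rpow_natCast, ← rpow_mul ht, ← rpow_neg ht]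
  norm_num

lemma hasDerivAt_div_mul_sqrt_add_sq {A : ℝ} (hA : 0 < A) (y : ℝ) :
    HasDerivAt (fun y => y / (A * √(A + y ^ 2))) ((A + y ^ 2) ^ (-(3 : ℝ) / 2)) y := by
  have hpos : 0 < A + y ^ 2 := by positivity
  have hs := sq_sqrt hpos.le
  have hsqrt : HasDerivAt (fun y => √(A + y ^ 2)) (2 * y / (2 * √(A + y ^ 2))) y := by
    simpa using ((hasDerivAt_pow 2 y).const_add A).sqrt hpos.ne'
  have hden : A * √(A + y ^ 2) ≠ 0 := by positivity
  refine ((hasDerivAt_id y).div (hsqrt.const_mul A) hden).congr_deriv ?_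
  rw [rpow_neg_three_div_two_eq_inv_sqrt_pow hpos.le]
  have : 0 < √(A + y ^ 2) := sqrt_pos.mpr hpos
  simp only [id]
  field_simp
  linear_combination hs

theorem integral_add_sq_rpow_neg_three_div_two {A : ℝ} (hA : 0 < A) (c d : ℝ) :
    ∫ y in c..d, (A + y ^ 2) ^ (-(3 : ℝ) / 2) =
      d / (A * √(A + d ^ 2)) - c / (A * √(A + c ^ 2)) := by
  refine intervalIntegral.integral_eq_sub_of_hasDerivAt
    (fun y _ => hasDerivAt_div_mul_sqrt_add_sq hA y) (Continuous.intervalIntegrable ?_ c d)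
  exact (continuous_const.add (continuous_pow 2)).rpow_const fun y =>
    Or.inl (by positivity : 0 < A + y ^ 2).ne'

-- The paper's `F(x, y)` is `cornerArctan (x₁ - x) (y₁ - y) z₁`.
noncomputable def cornerArctan (u v z : ℝ) : ℝ :=
  arctan (u * v / (z * √(u ^ 2 + v ^ 2 + z ^ 2)))

lemma cornerArctan_neg_neg (u v z : ℝ) : cornerArctan (-u) (-v) z = cornerArctan u v z := by
  simp only [cornerArctan, neg_mul_neg, even_two.neg_pow]

lemma hasDerivAt_cornerArctan {z : ℝ} (hz : z ≠ 0) (v x : ℝ) :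
    HasDerivAt (fun x => cornerArctan x v z)
      (z * v / ((x ^ 2 + z ^ 2) * √(x ^ 2 + v ^ 2 + z ^ 2))) x := by
  have hpos : 0 < x ^ 2 + v ^ 2 + z ^ 2 := by positivity
  have hs := sq_sqrt hpos.le
  have hsqrt : HasDerivAt (fun x => √(x ^ 2 + v ^ 2 + z ^ 2))
      (2 * x / (2 * √(x ^ 2 + v ^ 2 + z ^ 2))) x := by
    simpa using (((hasDerivAt_pow 2 x).add_const (v ^ 2)).add_const (z ^ 2)).sqrt hpos.ne'
  have hden : z * √(x ^ 2 + v ^ 2 + z ^ 2) ≠ 0 := by positivity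
  refine ((((hasDerivAt_id x).mul_const v).div (hsqrt.const_mul z) hden).arctan).congr_deriv ?_
  have : 0 < √(x ^ 2 + v ^ 2 + z ^ 2) := sqrt_pos.mpr hpos
  have : 0 < x ^ 2 + z ^ 2 := by positivity
  simp only [Pi.div_apply, id]
  field_simp
  linear_combination v * x ^ 2 * hs

theorem integral_eq_inv_mul_cornerArctan_sub {z : ℝ} (hz : z ≠ 0) (v a b : ℝ) :
    ∫ x in a..b, v / ((x ^ 2 + z ^ 2) * √(x ^ 2 + z ^ 2 + v ^ 2)) =
      z⁻¹ * (cornerArctan b v z - cornerArctan a v z) := by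
  rw [← intervalIntegral.integral_eq_sub_of_hasDerivAt
    (fun x _ => hasDerivAt_cornerArctan hz v x), ← intervalIntegral.integral_const_mul]
  · congr 1 with x
    rw [add_right_comm]
    field_simp
  · have : ∀ x : ℝ, (x ^ 2 + z ^ 2) * √(x ^ 2 + v ^ 2 + z ^ 2) ≠ 0 := fun x => by positivity
    exact (continuous_const.div (by fun_prop) this).intervalIntegrable a b

theorem integral_integral_sq_add_sq_add_sq_rpow_neg_three_div_two {z : ℝ} (hz : z ≠ 0)
    (a b c d : ℝ) :
    ∫ x in a..b, ∫ y in c..d, (x ^ 2 + y ^ 2 + z ^ 2) ^ (-(3 : ℝ) / 2) =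
      z⁻¹ * (cornerArctan b d z - cornerArctan b c z -
        cornerArctan a d z + cornerArctan a c z) := by
  have hA : ∀ x : ℝ, 0 < x ^ 2 + z ^ 2 := fun x => by positivity
  have hinner : ∀ x : ℝ, ∫ y in c..d, (x ^ 2 + y ^ 2 + z ^ 2) ^ (-(3 : ℝ) / 2) =
      d / ((x ^ 2 + z ^ 2) * √(x ^ 2 + z ^ 2 + d ^ 2)) -
        c / ((x ^ 2 + z ^ 2) * √(x ^ 2 + z ^ 2 + c ^ 2)) := fun x => by
    simp only [add_right_comm (x ^ 2) _ (z ^ 2)]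
    exact integral_add_sq_rpow_neg_three_div_two (hA x) c d
  have hcont : ∀ w : ℝ,
      Continuous fun x : ℝ => w / ((x ^ 2 + z ^ 2) * √(x ^ 2 + z ^ 2 + w ^ 2)) :=
    fun w => continuous_const.div (by fun_prop) fun x => by have := hA x; positivity
  simp only [hinner]
  rw [intervalIntegral.integral_sub ((hcont d).intervalIntegrable a b)
    ((hcont c).intervalIntegrable a b), integral_eq_inv_mul_cornerArctan_sub hz,
    integral_eq_inv_mul_cornerArctan_sub hz]
  ring

theorem integral_integral_sub_sq_add_sub_sq_add_sq_rpow_neg_three_div_two {z₁ : ℝ} (hz : z₁ ≠ 0)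
    (x₁ y₁ a b c d : ℝ) :
    ∫ x in a..b, ∫ y in c..d, ((x - x₁) ^ 2 + (y - y₁) ^ 2 + z₁ ^ 2) ^ (-(3 : ℝ) / 2) =
      z₁⁻¹ * (cornerArctan (x₁ - b) (y₁ - d) z₁ - cornerArctan (x₁ - b) (y₁ - c) z₁ -
        cornerArctan (x₁ - a) (y₁ - d) z₁ + cornerArctan (x₁ - a) (y₁ - c) z₁) := by
  have hshift : ∀ x : ℝ,
      ∫ y in c..d, ((x - x₁) ^ 2 + (y - y₁) ^ 2 + z₁ ^ 2) ^ (-(3 : ℝ) / 2) =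
        ∫ y in c - y₁..d - y₁, ((x - x₁) ^ 2 + y ^ 2 + z₁ ^ 2) ^ (-(3 : ℝ) / 2) := fun x =>
    intervalIntegral.integral_comp_sub_right (fun y => ((x - x₁) ^ 2 + y ^ 2 + z₁ ^ 2) ^ _) y₁
  rw [funext hshift, intervalIntegral.integral_comp_sub_right
    (fun x => ∫ y in c - y₁..d - y₁, (x ^ 2 + y ^ 2 + z₁ ^ 2) ^ (-(3 : ℝ) / 2)) x₁,
    integral_integral_sq_add_sq_add_sq_rpow_neg_three_div_two hz]
  simp only [← neg_sub _ x₁, ← neg_sub _ y₁, cornerArctan_neg_neg]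

theorem notable_integral_rectangle_general (x₁ y₁ z₁ Lx Ly : ℝ) (hz : z₁ ≠ 0) :
    (∫ x in (-Lx)..Lx, ∫ y in (-Ly)..Ly,
        ((x - x₁) ^ 2 + (y - y₁) ^ 2 + z₁ ^ 2) ^ (-(3 : ℝ) / 2)) =
      z₁⁻¹ *
        (Real.arctan ((x₁ - Lx) * (y₁ - Ly) /
            (z₁ * Real.sqrt ((x₁ - Lx) ^ 2 + (y₁ - Ly) ^ 2 + z₁ ^ 2)))
         - Real.arctan ((x₁ - Lx) * (y₁ - (-Ly)) /
            (z₁ * Real.sqrt ((x₁ - Lx) ^ 2 + (y₁ - (-Ly)) ^ 2 + z₁ ^ 2)))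
         - Real.arctan ((x₁ - (-Lx)) * (y₁ - Ly) /
            (z₁ * Real.sqrt ((x₁ - (-Lx)) ^ 2 + (y₁ - Ly) ^ 2 + z₁ ^ 2)))
         + Real.arctan ((x₁ - (-Lx)) * (y₁ - (-Ly)) /
            (z₁ * Real.sqrt ((x₁ - (-Lx)) ^ 2 + (y₁ - (-Ly)) ^ 2 + z₁ ^ 2)))) :=
  integral_integral_sub_sq_add_sub_sq_add_sq_rpow_neg_three_div_two hz x₁ y₁ (-Lx) Lx (-Ly) Ly

theorem notable_integral_rectangle (x₁ y₁ z₁ Lx Ly : ℝ) (hz : z₁ ≠ 0)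
    (hLx : 0 < Lx) (hLy : 0 < Ly) :
    (∫ x in (-Lx)..Lx, ∫ y in (-Ly)..Ly,
        ((x - x₁) ^ 2 + (y - y₁) ^ 2 + z₁ ^ 2) ^ (-(3 : ℝ) / 2)) =
      z₁⁻¹ *
        (Real.arctan ((x₁ - Lx) * (y₁ - Ly) /
            (z₁ * Real.sqrt ((x₁ - Lx) ^ 2 + (y₁ - Ly) ^ 2 + z₁ ^ 2)))
         - Real.arctan ((x₁ - Lx) * (y₁ - (-Ly)) /
            (z₁ * Real.sqrt ((x₁ - Lx) ^ 2 + (y₁ - (-Ly)) ^ 2 + z₁ ^ 2)))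
         - Real.arctan ((x₁ - (-Lx)) * (y₁ - Ly) /
            (z₁ * Real.sqrt ((x₁ - (-Lx)) ^ 2 + (y₁ - Ly) ^ 2 + z₁ ^ 2)))
         + Real.arctan ((x₁ - (-Lx)) * (y₁ - (-Ly)) /
            (z₁ * Real.sqrt ((x₁ - (-Lx)) ^ 2 + (y₁ - (-Ly)) ^ 2 + z₁ ^ 2)))) :=
  notable_integral_rectangle_general x₁ y₁ z₁ Lx Ly hz
end

section
/- With P(x,y) = d_Tx(x,y) + d_Rx(x,y) as above and (x_s,y_s) a stationary point of P at which the common polar angle is θ_s (so cosθ_s = z_T/d_Tx(x_s,y_s) = z_R/d_Rx(x_s,y_s)), the determinant of the Hessian of P at (x_s,y_s) equals cos²θ_s · (1/d_Tx(x_s,y_s) + 1/d_Rx(x_s,y_s))². -/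
/-!
Each distance `d(x, y) = √((x - a)² + (y - b)² + z²)` has Hessian `(I - n nᵀ) / d`, where
`n = ((x - a) / d, (y - b) / d)` is the horizontal part of its unit direction. At a stationary
point of `d_T + d_R` the two horizontal parts are opposite, so the Hessian of the sum is
`(1/d_T + 1/d_R) (I - n nᵀ)`, whose determinant is `(1/d_T + 1/d_R)² (1 - |n|²)`; and
`1 - |n|² = (z_T / d_T)² = cos²θ_s`.
-/

noncomputable def slantRange (a b z x y : ℝ) : ℝ :=
  √((x - a) ^ 2 + (y - b) ^ 2 + z ^ 2)

section slantRange

variable (a b z x y : ℝ)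

lemma slantRange_swap : slantRange a b z x y = slantRange b a z y x := by
  unfold slantRange; ring_nf

lemma sq_slantRange : slantRange a b z x y ^ 2 = (x - a) ^ 2 + (y - b) ^ 2 + z ^ 2 :=
  Real.sq_sqrt (by positivity)

variable {z}

lemma slantRange_pos (hz : z ≠ 0) : 0 < slantRange a b z x y :=
  Real.sqrt_pos.mpr (by positivity)

lemma hasDerivAt_slantRange_fst (hz : z ≠ 0) :
    HasDerivAt (fun x => slantRange a b z x y) ((x - a) / slantRange a b z x y) x := by
  have hrad : HasDerivAt (fun x => (x - a) ^ 2 + (y - b) ^ 2 + z ^ 2) (2 * (x - a)) x := by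
    simpa using
      ((((hasDerivAt_id' x).sub_const a).pow 2).add_const ((y - b) ^ 2)).add_const (z ^ 2)
  have hrad_ne : (x - a) ^ 2 + (y - b) ^ 2 + z ^ 2 ≠ 0 := by positivity
  refine ((Real.hasDerivAt_sqrt hrad_ne).comp x hrad).congr_deriv ?_
  have hd := slantRange_pos a b x y hz
  unfold slantRange at hd ⊢
  field_simp

lemma hasDerivAt_slantRange_snd (hz : z ≠ 0) :
    HasDerivAt (fun y => slantRange a b z x y) ((y - b) / slantRange a b z x y) y := by
  simp_rw [slantRange_swap a b]
  exact hasDerivAt_slantRange_fst b a y x hz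

lemma hasDerivAt_sub_div_slantRange_fst (hz : z ≠ 0) :
    HasDerivAt (fun x => (x - a) / slantRange a b z x y)
      (((y - b) ^ 2 + z ^ 2) / slantRange a b z x y ^ 3) x := by
  have hd := (slantRange_pos a b x y hz).ne'
  refine (((hasDerivAt_id' x).sub_const a).div (hasDerivAt_slantRange_fst a b x y hz)
    hd).congr_deriv ?_
  field_simp
  linear_combination sq_slantRange a b z x y

lemma hasDerivAt_sub_div_slantRange_snd (hz : z ≠ 0) :
    HasDerivAt (fun y => (y - b) / slantRange a b z x y)
      (((x - a) ^ 2 + z ^ 2) / slantRange a b z x y ^ 3) y := by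
  simp_rw [slantRange_swap a b]
  exact hasDerivAt_sub_div_slantRange_fst b a y x hz

lemma hasDerivAt_const_div_slantRange_snd (c : ℝ) (hz : z ≠ 0) :
    HasDerivAt (fun y => c / slantRange a b z x y)
      (-c * (y - b) / slantRange a b z x y ^ 3) y := by
  have hd := (slantRange_pos a b x y hz).ne'
  refine ((hasDerivAt_const y c).div (hasDerivAt_slantRange_snd a b x y hz) hd).congr_deriv ?_
  field_simp
  ring

end slantRange

lemma hessian_det_eq_of_opposite_directions {pT qT zT dT pR qR zR dR c : ℝ}
    (hdT : 0 < dT) (hdR : 0 < dR) (hT : dT ^ 2 = pT ^ 2 + qT ^ 2 + zT ^ 2)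
    (hp : pT / dT + pR / dR = 0) (hq : qT / dT + qR / dR = 0)
    (hcT : c = zT / dT) (hcR : c = zR / dR) :
    ((qT ^ 2 + zT ^ 2) / dT ^ 3 + (qR ^ 2 + zR ^ 2) / dR ^ 3) *
      ((pT ^ 2 + zT ^ 2) / dT ^ 3 + (pR ^ 2 + zR ^ 2) / dR ^ 3) -
      (-pT * qT / dT ^ 3 + -pR * qR / dR ^ 3) ^ 2 =
    c ^ 2 * (1 / dT + 1 / dR) ^ 2 := by
  have hpR : pR = -pT * dR / dT := by field_simp at hp ⊢; linarith
  have hqR : qR = -qT * dR / dT := by field_simp at hq ⊢; linarith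
  have hzR : zR = zT * dR / dT := by rw [hcT] at hcR; field_simp at hcR ⊢; linarith
  subst hpR hqR hzR hcT
  field_simp
  linear_combination -(zT ^ 2 * (dR + dT) ^ 2) * hT

/-- Determinant of the Hessian of `P = d_Tx + d_Rx` at a stationary point `(x_s, y_s)`
with common polar angle `θ_s` equals `cos²θ_s (1/d_Tx + 1/d_Rx)²`. -/
theorem hessian_det_at_stationary_point (xT yT zT xR yR zR xs ys : ℝ)
    (hzT : 0 < zT) (hzR : 0 < zR)
    (P : ℝ → ℝ → ℝ)
    (hP : ∀ x y, P x y = Real.sqrt ((x - xT) ^ 2 + (y - yT) ^ 2 + zT ^ 2)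
                        + Real.sqrt ((x - xR) ^ 2 + (y - yR) ^ 2 + zR ^ 2))
    (hx : deriv (fun x => P x ys) xs = 0)
    (hy : deriv (fun y => P xs y) ys = 0)
    (cosθ dT dR : ℝ)
    (hdT : dT = Real.sqrt ((xs - xT) ^ 2 + (ys - yT) ^ 2 + zT ^ 2))
    (hdR : dR = Real.sqrt ((xs - xR) ^ 2 + (ys - yR) ^ 2 + zR ^ 2))
    (hcosT : cosθ = zT / dT) (hcosR : cosθ = zR / dR) :
    (deriv (fun x => deriv (fun x' => P x' ys) x) xs) *
      (deriv (fun y => deriv (fun y' => P xs y') y) ys) -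
      (deriv (fun y => deriv (fun x => P x y) xs) ys) ^ 2 =
    cosθ ^ 2 * (1 / dT + 1 / dR) ^ 2 := by
  obtain rfl : P = fun x y => slantRange xT yT zT x y + slantRange xR yR zR x y :=
    funext fun x => funext fun y => hP x y
  replace hzT := hzT.ne'
  replace hzR := hzR.ne'
  have hPx (x y : ℝ) : deriv (fun x => slantRange xT yT zT x y + slantRange xR yR zR x y) x =
      (x - xT) / slantRange xT yT zT x y + (x - xR) / slantRange xR yR zR x y :=
    ((hasDerivAt_slantRange_fst _ _ x y hzT).fun_add
      (hasDerivAt_slantRange_fst _ _ x y hzR)).deriv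
  have hPy (y : ℝ) : deriv (fun y => slantRange xT yT zT xs y + slantRange xR yR zR xs y) y =
      (y - yT) / slantRange xT yT zT xs y + (y - yR) / slantRange xR yR zR xs y :=
    ((hasDerivAt_slantRange_snd _ _ xs y hzT).fun_add
      (hasDerivAt_slantRange_snd _ _ xs y hzR)).deriv
  simp only [hPx, hPy] at hx hy ⊢
  rw [((hasDerivAt_sub_div_slantRange_fst _ _ xs ys hzT).fun_add
      (hasDerivAt_sub_div_slantRange_fst _ _ xs ys hzR)).deriv,
    ((hasDerivAt_sub_div_slantRange_snd _ _ xs ys hzT).fun_add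
      (hasDerivAt_sub_div_slantRange_snd _ _ xs ys hzR)).deriv,
    ((hasDerivAt_const_div_slantRange_snd _ _ xs ys _ hzT).fun_add
      (hasDerivAt_const_div_slantRange_snd _ _ xs ys _ hzR)).deriv]
  have eT : slantRange xT yT zT xs ys = dT := hdT.symm
  have eR : slantRange xR yR zR xs ys = dR := hdR.symm
  rw [eT, eR] at hx hy ⊢
  exact hessian_det_eq_of_opposite_directions (eT ▸ slantRange_pos _ _ xs ys hzT)
    (eR ▸ slantRange_pos _ _ xs ys hzR) (eT ▸ sq_slantRange _ _ _ xs ys) hx hy hcosT hcosR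
end

section
/- Let R₁ = cos²Θ_r/(cosΘ_i + cosΘ_r)², R₂ = cos²Θ_i/(cosΘ_i + cosΘ_r)², and R₃ = (cos²Θ_i + cos²Θ_r + sin²Θ_i sin²Θ_r sin²(Φ_i − Φ_r))/(cosΘ_i + cosΘ_r)², with cosΘ_i, cosΘ_r > 0. Define f(ζ₁,ζ₂) = √(R₁ζ₁² + R₂ζ₂² + R₃ζ₁ζ₂). Then for ζ'₁ = ζ'₂ = ζ' > 0, the first-order Taylor approximation of f at (ζ',ζ') equals K₁ζ₁ + K₂ζ₂ with K₁ = (R₁ + R₃/2)/√(R₁ + R₂ + R₃) and K₂ = (R₂ + R₃/2)/√(R₁ + R₂ + R₃), independent of ζ'. -/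
/-! The weighted distance `√(R₁ζ₁² + R₂ζ₂² + R₃ζ₁ζ₂)` is positively homogeneous of degree one,
so by Euler's identity its tangent plane at any point of the open diagonal ray passes through the
origin: the constant term `ζ'(√S - K₁ - K₂)`, with `S = R₁ + R₂ + R₃`, vanishes because
`K₁ + K₂ = S / √S = √S`. -/

open Real

lemma sqrt_quadratic_diag (R₁ R₂ R₃ : ℝ) {ζ : ℝ} (hζ : 0 ≤ ζ) :
    √(R₁ * ζ ^ 2 + R₂ * ζ ^ 2 + R₃ * ζ * ζ) = √(R₁ + R₂ + R₃) * ζ := by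
  rw [show R₁ * ζ ^ 2 + R₂ * ζ ^ 2 + R₃ * ζ * ζ = (R₁ + R₂ + R₃) * ζ ^ 2 by ring,
    sqrt_mul' _ (sq_nonneg ζ), sqrt_sq hζ]

lemma hasDerivAt_sqrt_quadratic_fst_diag {R₁ R₂ R₃ ζ : ℝ} (hS : 0 < R₁ + R₂ + R₃) (hζ : 0 < ζ) :
    HasDerivAt (fun t => √(R₁ * t ^ 2 + R₂ * ζ ^ 2 + R₃ * t * ζ))
      ((R₁ + R₃ / 2) / √(R₁ + R₂ + R₃)) ζ := by
  have hQ : HasDerivAt (fun t => R₁ * t ^ 2 + R₂ * ζ ^ 2 + R₃ * t * ζ)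
      (R₁ * (2 * ζ) + R₃ * ζ) ζ := by
    refine ((((hasDerivAt_pow 2 ζ).const_mul R₁).add_const _).add
      (((hasDerivAt_id' ζ).const_mul R₃).mul_const ζ)).congr_deriv ?_
    ring
  have hQζ : R₁ * ζ ^ 2 + R₂ * ζ ^ 2 + R₃ * ζ * ζ ≠ 0 := by
    rw [show R₁ * ζ ^ 2 + R₂ * ζ ^ 2 + R₃ * ζ * ζ = (R₁ + R₂ + R₃) * ζ ^ 2 by ring]
    positivity
  convert hQ.sqrt hQζ using 1
  rw [sqrt_quadratic_diag R₁ R₂ R₃ hζ.le]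
  field_simp

lemma hasDerivAt_sqrt_quadratic_snd_diag {R₁ R₂ R₃ ζ : ℝ} (hS : 0 < R₁ + R₂ + R₃) (hζ : 0 < ζ) :
    HasDerivAt (fun t => √(R₁ * ζ ^ 2 + R₂ * t ^ 2 + R₃ * ζ * t))
      ((R₂ + R₃ / 2) / √(R₁ + R₂ + R₃)) ζ := by
  rw [add_comm R₁ R₂] at hS ⊢
  convert hasDerivAt_sqrt_quadratic_fst_diag (R₃ := R₃) hS hζ using 3 with t
  ring

theorem sqrt_quadratic_linearization_diag {R₁ R₂ R₃ ζ' : ℝ} (hS : 0 < R₁ + R₂ + R₃)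
    (hζ' : 0 < ζ') (ζ₁ ζ₂ : ℝ) :
    let f := fun ζ₁ ζ₂ => √(R₁ * ζ₁ ^ 2 + R₂ * ζ₂ ^ 2 + R₃ * ζ₁ * ζ₂)
    f ζ' ζ' + deriv (fun t => f t ζ') ζ' * (ζ₁ - ζ') + deriv (fun t => f ζ' t) ζ' * (ζ₂ - ζ') =
      (R₁ + R₃ / 2) / √(R₁ + R₂ + R₃) * ζ₁ + (R₂ + R₃ / 2) / √(R₁ + R₂ + R₃) * ζ₂ := by
  intro f
  have hK : (R₁ + R₃ / 2) / √(R₁ + R₂ + R₃) + (R₂ + R₃ / 2) / √(R₁ + R₂ + R₃) =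
      √(R₁ + R₂ + R₃) := by
    rw [← add_div, div_eq_iff (sqrt_pos.2 hS).ne', mul_self_sqrt hS.le]
    ring
  simp only [f, (hasDerivAt_sqrt_quadratic_fst_diag hS hζ').deriv,
    (hasDerivAt_sqrt_quadratic_snd_diag hS hζ').deriv, sqrt_quadratic_diag R₁ R₂ R₃ hζ'.le]
  linear_combination (-ζ') * hK

/-- Linearization of the weighted distance `f(ζ₁,ζ₂) = √(R₁ζ₁² + R₂ζ₂² + R₃ζ₁ζ₂)` at a
point `(ζ',ζ')` on the diagonal: the first-order Taylor approximation equals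
`K₁ζ₁ + K₂ζ₂`, independently of `ζ'`. -/
theorem weighted_sum_distance_linearization (Θi Θr Φi Φr : ℝ)
    (hi : 0 < Real.cos Θi) (hr : 0 < Real.cos Θr)
    (R₁ R₂ R₃ : ℝ)
    (hR₁ : R₁ = Real.cos Θr ^ 2 / (Real.cos Θi + Real.cos Θr) ^ 2)
    (hR₂ : R₂ = Real.cos Θi ^ 2 / (Real.cos Θi + Real.cos Θr) ^ 2)
    (hR₃ : R₃ = (Real.cos Θi ^ 2 + Real.cos Θr ^ 2 +
        Real.sin Θi ^ 2 * Real.sin Θr ^ 2 * Real.sin (Φi - Φr) ^ 2) /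
        (Real.cos Θi + Real.cos Θr) ^ 2)
    (f : ℝ → ℝ → ℝ)
    (hf : ∀ ζ₁ ζ₂, f ζ₁ ζ₂ = Real.sqrt (R₁ * ζ₁ ^ 2 + R₂ * ζ₂ ^ 2 + R₃ * ζ₁ * ζ₂))
    (K₁ K₂ : ℝ)
    (hK₁ : K₁ = (R₁ + R₃ / 2) / Real.sqrt (R₁ + R₂ + R₃))
    (hK₂ : K₂ = (R₂ + R₃ / 2) / Real.sqrt (R₁ + R₂ + R₃))
    (ζ' : ℝ) (hζ' : 0 < ζ') :
    ∀ ζ₁ ζ₂ : ℝ,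
      f ζ' ζ' + deriv (fun t => f t ζ') ζ' * (ζ₁ - ζ')
        + deriv (fun t => f ζ' t) ζ' * (ζ₂ - ζ') = K₁ * ζ₁ + K₂ * ζ₂ := by
  have hS : 0 < R₁ + R₂ + R₃ := by
    subst hR₁ hR₂ hR₃
    positivity
  obtain rfl : f = fun ζ₁ ζ₂ => √(R₁ * ζ₁ ^ 2 + R₂ * ζ₂ ^ 2 + R₃ * ζ₁ * ζ₂) := funext₂ hf
  subst hK₁ hK₂
  exact sqrt_quadratic_linearization_diag hS hζ'
end
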